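/- Let λ, μ be positive real numbers. The multiset {0, λ, λ, μ} is Laplacian realizable for the graph K₄ − e if and only if μ > 2λ or 0 < μ ≤ λ/2. -/

import Mathlib

set_option maxRecDepth 40000
set_option maxHeartbeats 1000000


open Matrix Polynomial

/-- `A` is a generalized Laplacian matrix for the graph `G`. -/
def IsGenLap {n : ℕ} (G : SimpleGraph (Fin n)) (A : Matrix (Fin n) (Fin n) ℝ) : Prop :=
  A.IsSymm ∧
  (∀ i j, G.Adj i j → A i j < 0) ∧
  (∀ i j, i ≠ j → ¬ G.Adj i j → A i j = 0) ∧
  (∀ i, ∑ j, A i j = 0)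

/-- The graph `K₄ − e`, the complete graph on 4 vertices minus one edge
(vertices `1,2,3,4` of the paper are `0,1,2,3` here; the missing edge is `{0,1}`). -/
def K4e : SimpleGraph (Fin 4) :=
  SimpleGraph.fromEdgeSet {s(0, 2), s(0, 3), s(1, 2), s(1, 3), s(2, 3)}

lemma K4e_adj (i j : Fin 4) :
    K4e.Adj i j ↔ (i ≠ j ∧ ¬(i = 0 ∧ j = 1) ∧ ¬(i = 1 ∧ j = 0)) := by
  rw [K4e, SimpleGraph.fromEdgeSet_adj]
  constructor
  · rintro ⟨hm, hne⟩
    refine ⟨hne, ?_, ?_⟩ <;> rintro ⟨rfl, rfl⟩ <;>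
      simp only [Set.mem_insert_iff, Set.mem_singleton_iff, Sym2.eq, Sym2.rel_iff',
        Prod.mk.injEq, Prod.swap_prod_mk] at hm <;> revert hm <;> decide
  · rintro ⟨hne, h1, h2⟩
    refine ⟨?_, hne⟩
    simp only [Set.mem_insert_iff, Set.mem_singleton_iff, Sym2.eq, Sym2.rel_iff',
      Prod.mk.injEq, Prod.swap_prod_mk]
    fin_cases i <;> fin_cases j <;> simp_all

lemma det4 (M : Matrix (Fin 4) (Fin 4) ℝ) :
    M.det =
      M 0 0 * (M 1 1 * (M 2 2 * M 3 3 - M 2 3 * M 3 2) - M 1 2 * (M 2 1 * M 3 3 - M 2 3 * M 3 1) +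
        M 1 3 * (M 2 1 * M 3 2 - M 2 2 * M 3 1)) -
      M 0 1 * (M 1 0 * (M 2 2 * M 3 3 - M 2 3 * M 3 2) - M 1 2 * (M 2 0 * M 3 3 - M 2 3 * M 3 0) +
        M 1 3 * (M 2 0 * M 3 2 - M 2 2 * M 3 0)) +
      M 0 2 * (M 1 0 * (M 2 1 * M 3 3 - M 2 3 * M 3 1) - M 1 1 * (M 2 0 * M 3 3 - M 2 3 * M 3 0) +
        M 1 3 * (M 2 0 * M 3 1 - M 2 1 * M 3 0)) -
      M 0 3 * (M 1 0 * (M 2 1 * M 3 2 - M 2 2 * M 3 1) - M 1 1 * (M 2 0 * M 3 2 - M 2 2 * M 3 0) +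
        M 1 2 * (M 2 0 * M 3 1 - M 2 1 * M 3 0)) := by
  rw [Matrix.det_succ_row_zero]
  simp [Fin.sum_univ_succ, Matrix.det_fin_three, Fin.succAbove]
  ring

lemma evalCharpoly (A : Matrix (Fin 4) (Fin 4) ℝ) (t : ℝ) :
    A.charpoly.eval t = (Matrix.of fun i j => (if i = j then t else 0) - A i j).det := by
  have h := (Polynomial.evalRingHom t).map_det (charmatrix A)
  rw [Matrix.charpoly]
  simp only [coe_evalRingHom] at h
  rw [h]
  congr 1
  ext i j
  by_cases hij : i = j
  · subst hij; simp [Matrix.charmatrix_apply_eq]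
  · simp [Matrix.charmatrix_apply_ne _ _ _ hij, hij]

lemma lapCharEval (a b c d e t : ℝ) :
    ((!![a+b, 0, -a, -b; 0, c+d, -c, -d; -a, -c, a+c+e, -e; -b, -d, -e, b+d+e] :
      Matrix (Fin 4) (Fin 4) ℝ).charpoly).eval t
    = t^4 - (2*a+2*b+2*c+2*d+2*e)*t^3
      + (3*a*b + 3*a*c + 4*a*d + 3*a*e + 4*b*c + 3*b*d + 3*b*e + 3*c*d + 3*c*e + 3*d*e)*t^2
      - (4*a*b*c + 4*a*b*d + 4*a*c*d + 4*a*c*e + 4*a*d*e + 4*b*c*d + 4*b*c*e + 4*b*d*e)*t := by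
  rw [evalCharpoly, det4]
  simp [Matrix.of_apply]
  ring

lemma realize (lam mu a b c d e : ℝ) (ha : 0 < a) (hb : 0 < b) (hc : 0 < c) (hd : 0 < d)
    (he : 0 < e)
    (hD3 : 2*a+2*b+2*c+2*d+2*e = 2*lam + mu)
    (hD2 : 3*a*b + 3*a*c + 4*a*d + 3*a*e + 4*b*c + 3*b*d + 3*b*e + 3*c*d + 3*c*e + 3*d*e
      = lam^2 + 2*lam*mu)
    (hD1 : 4*a*b*c + 4*a*b*d + 4*a*c*d + 4*a*c*e + 4*a*d*e + 4*b*c*d + 4*b*c*e + 4*b*d*e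
      = lam^2*mu) :
    ∃ A : Matrix (Fin 4) (Fin 4) ℝ, IsGenLap K4e A ∧
      A.charpoly.roots = (0 ::ₘ lam ::ₘ lam ::ₘ {mu}) := by
  refine ⟨!![a+b, 0, -a, -b; 0, c+d, -c, -d; -a, -c, a+c+e, -e; -b, -d, -e, b+d+e], ⟨?_, ?_, ?_, ?_⟩, ?_⟩
  · apply Matrix.IsSymm.ext
    intro i j
    fin_cases i <;> fin_cases j <;> simp
  · intro i j hadj
    rw [K4e_adj] at hadj
    obtain ⟨hne, h01, h10⟩ := hadj
    fin_cases i <;> fin_cases j <;>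
      simp_all <;> linarith
  · intro i j hne hna
    have h : (i = 0 ∧ j = 1) ∨ (i = 1 ∧ j = 0) := by
      by_contra hcon
      push_neg at hcon
      exact hna ((K4e_adj i j).mpr ⟨hne, by tauto, by tauto⟩)
    rcases h with ⟨rfl, rfl⟩ | ⟨rfl, rfl⟩ <;> simp
  · intro i
    fin_cases i <;> (simp [Fin.sum_univ_four]; try ring)
  · have hcp : (!![a+b, 0, -a, -b; 0, c+d, -c, -d; -a, -c, a+c+e, -e; -b, -d, -e, b+d+e] :
        Matrix (Fin 4) (Fin 4) ℝ).charpoly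
        = ((0 ::ₘ lam ::ₘ lam ::ₘ {mu} : Multiset ℝ).map fun r => X - C r).prod := by
      apply Polynomial.funext
      intro t
      rw [lapCharEval]
      simp only [Multiset.map_cons, Multiset.map_singleton, Multiset.prod_cons,
        Multiset.prod_singleton, Polynomial.eval_mul, Polynomial.eval_sub, Polynomial.eval_X,
        Polynomial.eval_C]
      linear_combination (-(t^3)) * hD3 + t^2 * hD2 + (-t) * hD1
    rw [hcp, Polynomial.roots_multiset_prod_X_sub_C]

lemma construct (lam mu : ℝ) (hlam : 0 < lam) (hmu : 0 < mu)
    (h : 2 * lam < mu ∨ mu ≤ lam / 2) :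
    ∃ A : Matrix (Fin 4) (Fin 4) ℝ, IsGenLap K4e A ∧
      A.charpoly.roots = (0 ::ₘ lam ::ₘ lam ::ₘ {mu}) := by
  rcases h with h | h
  · by_cases h3 : mu ≤ 3 * lam
    · set s := Real.sqrt (2*lam*mu - 4*lam^2) with hsdef
      have hs : s^2 = 2*lam*mu - 4*lam^2 := Real.sq_sqrt (by nlinarith)
      have hs0 : 0 ≤ s := Real.sqrt_nonneg _
      have hsub : s < 2*lam := by nlinarith
      exact realize lam mu (lam/2+s/4) (lam/2-s/4) (lam/2+s/4) (lam/2-s/4) ((mu-2*lam)/2)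
        (by linarith) (by linarith) (by linarith) (by linarith) (by linarith)
        (by ring) (by linear_combination (-1/2 : ℝ) * hs)
        (by linear_combination (-lam/2) * hs)
    · push_neg at h3
      set s := Real.sqrt (4*mu^2 - 12*lam*mu + 5*lam^2) with hsdef
      have hs : s^2 = 4*mu^2 - 12*lam*mu + 5*lam^2 := Real.sq_sqrt (by nlinarith)
      have hs0 : 0 ≤ s := Real.sqrt_nonneg _
      have hsub : s < 2*mu + lam := by nlinarith
      exact realize lam mu ((2*mu+lam-s)/8) (lam/4) ((2*mu+lam+s)/8) (lam/4) (lam/4)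
        (by linarith) (by linarith) (by linarith) (by linarith) (by linarith)
        (by ring) (by linear_combination (-3/64 : ℝ) * hs)
        (by linear_combination (-3*lam/64) * hs)
  · set s := Real.sqrt (lam^2 - 2*lam*mu) with hsdef
    have hs : s^2 = lam^2 - 2*lam*mu := Real.sq_sqrt (by nlinarith)
    have hs0 : 0 ≤ s := Real.sqrt_nonneg _
    have hsub : s < lam := by nlinarith
    exact realize lam mu ((lam+s)/4) ((lam-s)/4) ((lam-s)/4) ((lam+s)/4) (mu/2)
      (by linarith) (by linarith) (by linarith) (by linarith) (by linarith)
      (by ring) (by linear_combination (-1/4 : ℝ) * hs)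
      (by linear_combination (-lam/4) * hs)

set_option maxHeartbeats 2000000 in
lemma core (lam mu a b c d e : ℝ) (hlam : 0 < lam) (hmu : 0 < mu)
    (ha : 0 < a) (hb : 0 < b) (hc : 0 < c) (hd : 0 < d) (he : 0 < e)
    (hD3 : 2*a+2*b+2*c+2*d+2*e = 2*lam + mu)
    (hD2 : 3*a*b + 3*a*c + 4*a*d + 3*a*e + 4*b*c + 3*b*d + 3*b*e + 3*c*d + 3*c*e + 3*d*e
      = lam^2 + 2*lam*mu)
    (hD1 : 4*a*b*c + 4*a*b*d + 4*a*c*d + 4*a*c*e + 4*a*d*e + 4*b*c*d + 4*b*c*e + 4*b*d*e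
      = lam^2*mu) :
    2 * lam < mu ∨ mu ≤ lam / 2 := by
  have hH : (2*a^2 + 2*a*b + (-1)*a*lam + (-1)*a*mu + 2*b^2 + (-1)*b*lam + (-1)*b*mu + (3/4)*lam*mu)^2 + (2*c^2 + 2*c*d + (-1)*c*lam + (-1)*c*mu + 2*d^2 + (-1)*d*lam + (-1)*d*mu + (3/4)*lam*mu)^2 + (2*a^2 + 2*a*c + 2*a*e + (-1)*a*lam + (-1)*a*mu + 2*c^2 + 2*c*e + (-1)*c*lam + (-1)*c*mu + 2*e^2 + (-1)*e*lam + (-1)*e*mu + (3/4)*lam*mu)^2 + (2*b^2 + 2*b*d + 2*b*e + (-1)*b*lam + (-1)*b*mu + 2*d^2 + 2*d*e + (-1)*d*lam + (-1)*d*mu + 2*e^2 + (-1)*e*lam + (-1)*e*mu + (3/4)*lam*mu)^2 + 2*(a*c + b*d + (-1/4)*lam*mu)^2 + 2*((-2)*a^2 + (-1)*a*b + (-1)*a*c + (-1)*a*e + a*lam + a*mu + b*e + (-1/4)*lam*mu)^2 + 2*((-1)*a*b + a*e + (-2)*b^2 + (-1)*b*d + (-1)*b*e + b*lam + b*mu +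 (-1/4)*lam*mu)^2 + 2*((-1)*a*c + (-2)*c^2 + (-1)*c*d + (-1)*c*e + c*lam + c*mu + d*e + (-1/4)*lam*mu)^2 + 2*((-1)*b*d + (-1)*c*d + c*e + (-2)*d^2 + (-1)*d*e + d*lam + d*mu + (-1/4)*lam*mu)^2 + 2*(a*b + (-1)*a*e + (-1)*b*e + c*d + (-1)*c*e + (-1)*d*e + (-2)*e^2 + e*lam + e*mu + (-1/4)*lam*mu)^2 = 0 := by
    linear_combination (8*a^3 + (-8)*a^2*d + (-4)*a^2*mu + (-8)*a*b*c + (-8)*a*b*d + (-24)*a*b*e + (-2)*a*b*mu + (-8)*a*c*d + (-2)*a*c*mu + (-8)*a*d^2 + (-8)*a*d*e + (-2)*a*e*mu + 2*a*lam^2 + 4*a*lam*mu + 8*b^3 + (-8)*b^2*c + (-4)*b^2*mu + (-8)*b*c^2 + (-8)*b*c*d + (-8)*b*c*e + (-2)*b*d*mu + (-2)*b*e*mu + 2*b*lam^2 + 4*b*lam*mu + 8*c^3 + (-4)*c^2*mu + (-24)*c*d*e + (-2)*c*d*mu + (-2)*c*e*mu + 2*c*lam^2 + 4*c*lam*mu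 + 8*d^3 + (-4)*d^2*mu + (-2)*d*e*mu + 2*d*lam^2 + 4*d*lam*mu + 8*e^3 + (-4)*e^2*mu + 2*e*lam^2 + 4*e*lam*mu + (-3)*lam^2*mu) * hD3 + (6*a*b + 6*a*c + 8*a*d + 6*a*e + (-4)*a*lam + 8*b*c + 6*b*d + 6*b*e + (-4)*b*lam + 6*c*d + 6*c*e + (-4)*c*lam + 6*d*e + (-4)*d*lam + (-4)*e*lam) * hD2 + ((-4)*a + (-4)*b + (-4)*c + (-4)*d + (-4)*e + 6*lam) * hD1
  have hP00 : (2*a^2 + 2*a*b + (-1)*a*lam + (-1)*a*mu + 2*b^2 + (-1)*b*lam + (-1)*b*mu + (3/4)*lam*mu) = 0 := by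
    have h2 : (2*a^2 + 2*a*b + (-1)*a*lam + (-1)*a*mu + 2*b^2 + (-1)*b*lam + (-1)*b*mu + (3/4)*lam*mu)^2 ≤ 0 := by
      linarith [hH, sq_nonneg (2*c^2 + 2*c*d + (-1)*c*lam + (-1)*c*mu + 2*d^2 + (-1)*d*lam + (-1)*d*mu + (3/4)*lam*mu), sq_nonneg (2*a^2 + 2*a*c + 2*a*e + (-1)*a*lam + (-1)*a*mu + 2*c^2 + 2*c*e + (-1)*c*lam + (-1)*c*mu + 2*e^2 + (-1)*e*lam + (-1)*e*mu + (3/4)*lam*mu), sq_nonneg (2*b^2 + 2*b*d + 2*b*e + (-1)*b*lam + (-1)*b*mu + 2*d^2 + 2*d*e + (-1)*d*lam + (-1)*d*mu + 2*e^2 + (-1)*e*lam + (-1)*e*mu + (3/4)*lam*mu),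
        sq_nonneg (a*c + b*d + (-1/4)*lam*mu), sq_nonneg ((-2)*a^2 + (-1)*a*b + (-1)*a*c + (-1)*a*e + a*lam + a*mu + b*e + (-1/4)*lam*mu), sq_nonneg ((-1)*a*b + a*e + (-2)*b^2 + (-1)*b*d + (-1)*b*e + b*lam + b*mu + (-1/4)*lam*mu),
        sq_nonneg ((-1)*a*c + (-2)*c^2 + (-1)*c*d + (-1)*c*e + c*lam + c*mu + d*e + (-1/4)*lam*mu), sq_nonneg ((-1)*b*d + (-1)*c*d + c*e + (-2)*d^2 + (-1)*d*e + d*lam + d*mu + (-1/4)*lam*mu), sq_nonneg (a*b + (-1)*a*e + (-1)*b*e + c*d + (-1)*c*e + (-1)*d*e + (-2)*e^2 + e*lam + e*mu + (-1/4)*lam*mu)]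
    exact pow_eq_zero_iff (n := 2) (by norm_num) |>.mp (le_antisymm h2 (sq_nonneg _))
  have hP01 : (a*c + b*d + (-1/4)*lam*mu) = 0 := by
    have h2 : (a*c + b*d + (-1/4)*lam*mu)^2 ≤ 0 := by
      linarith [hH, sq_nonneg (2*a^2 + 2*a*b + (-1)*a*lam + (-1)*a*mu + 2*b^2 + (-1)*b*lam + (-1)*b*mu + (3/4)*lam*mu), sq_nonneg (2*c^2 + 2*c*d + (-1)*c*lam + (-1)*c*mu + 2*d^2 + (-1)*d*lam + (-1)*d*mu + (3/4)*lam*mu), sq_nonneg (2*a^2 + 2*a*c + 2*a*e + (-1)*a*lam + (-1)*a*mu + 2*c^2 + 2*c*e + (-1)*c*lam + (-1)*c*mu + 2*e^2 + (-1)*e*lam + (-1)*e*mu + (3/4)*lam*mu),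
        sq_nonneg (2*b^2 + 2*b*d + 2*b*e + (-1)*b*lam + (-1)*b*mu + 2*d^2 + 2*d*e + (-1)*d*lam + (-1)*d*mu + 2*e^2 + (-1)*e*lam + (-1)*e*mu + (3/4)*lam*mu), sq_nonneg ((-2)*a^2 + (-1)*a*b + (-1)*a*c + (-1)*a*e + a*lam + a*mu + b*e + (-1/4)*lam*mu), sq_nonneg ((-1)*a*b + a*e + (-2)*b^2 + (-1)*b*d + (-1)*b*e + b*lam + b*mu + (-1/4)*lam*mu),
        sq_nonneg ((-1)*a*c + (-2)*c^2 + (-1)*c*d + (-1)*c*e + c*lam + c*mu + d*e + (-1/4)*lam*mu), sq_nonneg ((-1)*b*d + (-1)*c*d + c*e + (-2)*d^2 + (-1)*d*e + d*lam + d*mu + (-1/4)*lam*mu), sq_nonneg (a*b + (-1)*a*e + (-1)*b*e + c*d + (-1)*c*e + (-1)*d*e + (-2)*e^2 + e*lam + e*mu + (-1/4)*lam*mu)]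
    exact pow_eq_zero_iff (n := 2) (by norm_num) |>.mp (le_antisymm h2 (sq_nonneg _))
  have hP11 : (2*c^2 + 2*c*d + (-1)*c*lam + (-1)*c*mu + 2*d^2 + (-1)*d*lam + (-1)*d*mu + (3/4)*lam*mu) = 0 := by
    have h2 : (2*c^2 + 2*c*d + (-1)*c*lam + (-1)*c*mu + 2*d^2 + (-1)*d*lam + (-1)*d*mu + (3/4)*lam*mu)^2 ≤ 0 := by
      linarith [hH, sq_nonneg (2*a^2 + 2*a*b + (-1)*a*lam + (-1)*a*mu + 2*b^2 + (-1)*b*lam + (-1)*b*mu + (3/4)*lam*mu), sq_nonneg (2*a^2 + 2*a*c + 2*a*e + (-1)*a*lam + (-1)*a*mu + 2*c^2 + 2*c*e + (-1)*c*lam + (-1)*c*mu + 2*e^2 + (-1)*e*lam + (-1)*e*mu + (3/4)*lam*mu), sq_nonneg (2*b^2 + 2*b*d + 2*b*e + (-1)*b*lam + (-1)*b*mu + 2*d^2 + 2*d*e + (-1)*d*lam + (-1)*d*mu + 2*e^2 + (-1)*e*lam + (-1)*e*mu + (3/4)*lam*mu),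
        sq_nonneg (a*c + b*d + (-1/4)*lam*mu), sq_nonneg ((-2)*a^2 + (-1)*a*b + (-1)*a*c + (-1)*a*e + a*lam + a*mu + b*e + (-1/4)*lam*mu), sq_nonneg ((-1)*a*b + a*e + (-2)*b^2 + (-1)*b*d + (-1)*b*e + b*lam + b*mu + (-1/4)*lam*mu),
        sq_nonneg ((-1)*a*c + (-2)*c^2 + (-1)*c*d + (-1)*c*e + c*lam + c*mu + d*e + (-1/4)*lam*mu), sq_nonneg ((-1)*b*d + (-1)*c*d + c*e + (-2)*d^2 + (-1)*d*e + d*lam + d*mu + (-1/4)*lam*mu), sq_nonneg (a*b + (-1)*a*e + (-1)*b*e + c*d + (-1)*c*e + (-1)*d*e + (-2)*e^2 + e*lam + e*mu + (-1/4)*lam*mu)]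
    exact pow_eq_zero_iff (n := 2) (by norm_num) |>.mp (le_antisymm h2 (sq_nonneg _))
  have hP22 : (2*a^2 + 2*a*c + 2*a*e + (-1)*a*lam + (-1)*a*mu + 2*c^2 + 2*c*e + (-1)*c*lam + (-1)*c*mu + 2*e^2 + (-1)*e*lam + (-1)*e*mu + (3/4)*lam*mu) = 0 := by
    have h2 : (2*a^2 + 2*a*c + 2*a*e + (-1)*a*lam + (-1)*a*mu + 2*c^2 + 2*c*e + (-1)*c*lam + (-1)*c*mu + 2*e^2 + (-1)*e*lam + (-1)*e*mu + (3/4)*lam*mu)^2 ≤ 0 := by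
      linarith [hH, sq_nonneg (2*a^2 + 2*a*b + (-1)*a*lam + (-1)*a*mu + 2*b^2 + (-1)*b*lam + (-1)*b*mu + (3/4)*lam*mu), sq_nonneg (2*c^2 + 2*c*d + (-1)*c*lam + (-1)*c*mu + 2*d^2 + (-1)*d*lam + (-1)*d*mu + (3/4)*lam*mu), sq_nonneg (2*b^2 + 2*b*d + 2*b*e + (-1)*b*lam + (-1)*b*mu + 2*d^2 + 2*d*e + (-1)*d*lam + (-1)*d*mu + 2*e^2 + (-1)*e*lam + (-1)*e*mu + (3/4)*lam*mu),
        sq_nonneg (a*c + b*d + (-1/4)*lam*mu), sq_nonneg ((-2)*a^2 + (-1)*a*b + (-1)*a*c + (-1)*a*e + a*lam + a*mu + b*e + (-1/4)*lam*mu), sq_nonneg ((-1)*a*b + a*e + (-2)*b^2 + (-1)*b*d + (-1)*b*e + b*lam + b*mu + (-1/4)*lam*mu),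
        sq_nonneg ((-1)*a*c + (-2)*c^2 + (-1)*c*d + (-1)*c*e + c*lam + c*mu + d*e + (-1/4)*lam*mu), sq_nonneg ((-1)*b*d + (-1)*c*d + c*e + (-2)*d^2 + (-1)*d*e + d*lam + d*mu + (-1/4)*lam*mu), sq_nonneg (a*b + (-1)*a*e + (-1)*b*e + c*d + (-1)*c*e + (-1)*d*e + (-2)*e^2 + e*lam + e*mu + (-1/4)*lam*mu)]
    exact pow_eq_zero_iff (n := 2) (by norm_num) |>.mp (le_antisymm h2 (sq_nonneg _))
  have hP33 : (2*b^2 + 2*b*d + 2*b*e + (-1)*b*lam + (-1)*b*mu + 2*d^2 + 2*d*e + (-1)*d*lam + (-1)*d*mu + 2*e^2 + (-1)*e*lam + (-1)*e*mu + (3/4)*lam*mu) = 0 := by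
    have h2 : (2*b^2 + 2*b*d + 2*b*e + (-1)*b*lam + (-1)*b*mu + 2*d^2 + 2*d*e + (-1)*d*lam + (-1)*d*mu + 2*e^2 + (-1)*e*lam + (-1)*e*mu + (3/4)*lam*mu)^2 ≤ 0 := by
      linarith [hH, sq_nonneg (2*a^2 + 2*a*b + (-1)*a*lam + (-1)*a*mu + 2*b^2 + (-1)*b*lam + (-1)*b*mu + (3/4)*lam*mu), sq_nonneg (2*c^2 + 2*c*d + (-1)*c*lam + (-1)*c*mu + 2*d^2 + (-1)*d*lam + (-1)*d*mu + (3/4)*lam*mu), sq_nonneg (2*a^2 + 2*a*c + 2*a*e + (-1)*a*lam + (-1)*a*mu + 2*c^2 + 2*c*e + (-1)*c*lam + (-1)*c*mu + 2*e^2 + (-1)*e*lam + (-1)*e*mu + (3/4)*lam*mu),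
        sq_nonneg (a*c + b*d + (-1/4)*lam*mu), sq_nonneg ((-2)*a^2 + (-1)*a*b + (-1)*a*c + (-1)*a*e + a*lam + a*mu + b*e + (-1/4)*lam*mu), sq_nonneg ((-1)*a*b + a*e + (-2)*b^2 + (-1)*b*d + (-1)*b*e + b*lam + b*mu + (-1/4)*lam*mu),
        sq_nonneg ((-1)*a*c + (-2)*c^2 + (-1)*c*d + (-1)*c*e + c*lam + c*mu + d*e + (-1/4)*lam*mu), sq_nonneg ((-1)*b*d + (-1)*c*d + c*e + (-2)*d^2 + (-1)*d*e + d*lam + d*mu + (-1/4)*lam*mu), sq_nonneg (a*b + (-1)*a*e + (-1)*b*e + c*d + (-1)*c*e + (-1)*d*e + (-2)*e^2 + e*lam + e*mu + (-1/4)*lam*mu)]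
    exact pow_eq_zero_iff (n := 2) (by norm_num) |>.mp (le_antisymm h2 (sq_nonneg _))
  clear hH
  rcases lt_trichotomy lam mu with hlt | heq | hgt
  · left
    have hk1 : (mu-lam)*(a+b+c+d-2*lam)
        = (a+b-lam)^2+(lam-c-d)^2+(c-a)^2+(d-b)^2 := by
      linear_combination (-1 : ℝ) * hP00 + 2 * hP01 + (-1 : ℝ) * hP11
    have hprod : 0 ≤ (mu-lam)*(a+b+c+d-2*lam) := by rw [hk1]; positivity
    have hge : 0 ≤ a+b+c+d-2*lam := by nlinarith [hprod, hlt]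
    linarith [hD3, he, hge]
  · exfalso
    have hk0 : (mu-lam)*(a+b-3*lam/4)
        = (a+b-3*lam/4)^2+(lam/4)^2+(a-lam/4)^2+(b-lam/4)^2 := by
      linear_combination (-1 : ℝ) * hP00
    rw [← heq] at hk0
    nlinarith [hk0, sq_nonneg (a+b-3*lam/4), sq_nonneg (a-lam/4), sq_nonneg (b-lam/4),
      mul_pos hlam hlam]
  · right
    have hk2 : (mu-lam)*(a+b+c+d-lam)
        = (a+b-lam/2)^2+(c+d-lam/2)^2+(a+c-lam/2)^2+(b+d-lam/2)^2 := by
      linear_combination (-1 : ℝ) * hP00 - 2 * hP01 + (-1 : ℝ) * hP11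
    have hk3 : (mu-lam)*(a+c+e-3*lam/4)
        = (a-lam/4)^2+(c-lam/4)^2+(a+c+e-3*lam/4)^2+(e-lam/4)^2 := by
      linear_combination (-1 : ℝ) * hP22
    have hk4 : (mu-lam)*(b+d+e-3*lam/4)
        = (b-lam/4)^2+(d-lam/4)^2+(e-lam/4)^2+(b+d+e-3*lam/4)^2 := by
      linear_combination (-1 : ℝ) * hP33
    have hpr2 : 0 ≤ (mu-lam)*(a+b+c+d-lam) := by rw [hk2]; positivity
    have hpr3 : 0 ≤ (mu-lam)*(a+c+e-3*lam/4) := by rw [hk3]; positivity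
    have hpr4 : 0 ≤ (mu-lam)*(b+d+e-3*lam/4) := by rw [hk4]; positivity
    have h2 : a+b+c+d ≤ lam := by nlinarith [hpr2, hgt]
    have h3 : a+c+e ≤ 3*lam/4 := by nlinarith [hpr3, hgt]
    have h4 : b+d+e ≤ 3*lam/4 := by nlinarith [hpr4, hgt]
    linarith [hD3, h2, h3, h4]


lemma onlyIf (lam mu : ℝ) (hlam : 0 < lam) (hmu : 0 < mu)
    (A : Matrix (Fin 4) (Fin 4) ℝ) (hGL : IsGenLap K4e A)
    (hroots : A.charpoly.roots = (0 ::ₘ lam ::ₘ lam ::ₘ {mu})) :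
    2 * lam < mu ∨ mu ≤ lam / 2 := by
  obtain ⟨hsym, hadj, hnadj, hrow⟩ := hGL
  have hmonic : A.charpoly.Monic := A.charpoly_monic
  have hdeg : A.charpoly.natDegree = 4 := by
    rw [Matrix.charpoly_natDegree_eq_dim]; simp
  have hfac := Polynomial.prod_multiset_X_sub_C_of_monic_of_roots_card_eq hmonic
    (by rw [hroots, hdeg]; rfl)
  have hev : ∀ t : ℝ, A.charpoly.eval t = t*(t-lam)^2*(t-mu) := by
    intro t
    rw [← hfac, hroots]
    simp only [Multiset.map_cons, Multiset.map_singleton, Multiset.prod_cons,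
      Multiset.prod_singleton, Polynomial.eval_mul, Polynomial.eval_sub, Polynomial.eval_X,
      Polynomial.eval_C]
    ring
  have hadj02 : K4e.Adj 0 2 := (K4e_adj 0 2).mpr ⟨by decide, by decide, by decide⟩
  have hadj03 : K4e.Adj 0 3 := (K4e_adj 0 3).mpr ⟨by decide, by decide, by decide⟩
  have hadj12 : K4e.Adj 1 2 := (K4e_adj 1 2).mpr ⟨by decide, by decide, by decide⟩
  have hadj13 : K4e.Adj 1 3 := (K4e_adj 1 3).mpr ⟨by decide, by decide, by decide⟩
  have hadj23 : K4e.Adj 2 3 := (K4e_adj 2 3).mpr ⟨by decide, by decide, by decide⟩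
  set a : ℝ := -A 0 2 with hadef
  set b : ℝ := -A 0 3 with hbdef
  set c : ℝ := -A 1 2 with hcdef
  set d : ℝ := -A 1 3 with hddef
  set e : ℝ := -A 2 3 with hedef
  have ha : 0 < a := by have := hadj 0 2 hadj02; rw [hadef]; linarith
  have hb : 0 < b := by have := hadj 0 3 hadj03; rw [hbdef]; linarith
  have hc : 0 < c := by have := hadj 1 2 hadj12; rw [hcdef]; linarith
  have hd : 0 < d := by have := hadj 1 3 hadj13; rw [hddef]; linarith
  have he : 0 < e := by have := hadj 2 3 hadj23; rw [hedef]; linarith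
  have h01 : A 0 1 = 0 := hnadj 0 1 (by decide)
    (by rw [K4e_adj]; rintro ⟨-, hcon, -⟩; exact hcon ⟨rfl, rfl⟩)
  have hr0 := hrow 0; have hr1 := hrow 1; have hr2 := hrow 2; have hr3 := hrow 3
  rw [Fin.sum_univ_four] at hr0 hr1 hr2 hr3
  have hA : A = !![a+b, 0, -a, -b; 0, c+d, -c, -d; -a, -c, a+c+e, -e; -b, -d, -e, b+d+e] := by
    ext i j
    fin_cases i <;> fin_cases j <;>
      simp only [hadef, hbdef, hcdef, hddef, hedef] <;>
      first
        | (simp; linarith [hsym.apply 0 1, hsym.apply 0 2, hsym.apply 0 3, hsym.apply 1 2,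
            hsym.apply 1 3, hsym.apply 2 3, h01])
        | (simp [h01])
  have hq : ∀ t : ℝ, t^4 - (2*a+2*b+2*c+2*d+2*e)*t^3
      + (3*a*b + 3*a*c + 4*a*d + 3*a*e + 4*b*c + 3*b*d + 3*b*e + 3*c*d + 3*c*e + 3*d*e)*t^2
      - (4*a*b*c + 4*a*b*d + 4*a*c*d + 4*a*c*e + 4*a*d*e + 4*b*c*d + 4*b*c*e + 4*b*d*e)*t
      = t*(t-lam)^2*(t-mu) := by
    intro t
    have h1 := lapCharEval a b c d e t
    rw [← hA] at h1
    rw [← h1]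
    exact hev t
  have hD3 : 2*a+2*b+2*c+2*d+2*e = 2*lam + mu := by
    linear_combination (1/2 : ℝ) * hq 1 + (1/6 : ℝ) * hq (-1) - (1/6 : ℝ) * hq 2
  have hD2 : 3*a*b + 3*a*c + 4*a*d + 3*a*e + 4*b*c + 3*b*d + 3*b*e + 3*c*d + 3*c*e + 3*d*e
      = lam^2 + 2*lam*mu := by
    linear_combination (1/2 : ℝ) * hq 1 + (1/2 : ℝ) * hq (-1)
  have hD1 : 4*a*b*c + 4*a*b*d + 4*a*c*d + 4*a*c*e + 4*a*d*e + 4*b*c*d + 4*b*c*e + 4*b*d*e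
      = lam^2*mu := by
    linear_combination (-1 : ℝ) * hq 1 + (1/3 : ℝ) * hq (-1) + (1/6 : ℝ) * hq 2
  exact core lam mu a b c d e hlam hmu ha hb hc hd he hD3 hD2 hD1

/-- For `λ, μ > 0`, the multiset `{0, λ, λ, μ}` is Laplacian realizable for `K₄ − e`
if and only if `μ > 2λ` or `μ ≤ λ/2`. -/
theorem stmt17 (lam mu : ℝ) (hlam : 0 < lam) (hmu : 0 < mu) :
    (∃ A : Matrix (Fin 4) (Fin 4) ℝ, IsGenLap K4e A ∧
        A.charpoly.roots = (0 ::ₘ lam ::ₘ lam ::ₘ {mu})) ↔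
      (2 * lam < mu ∨ mu ≤ lam / 2) := by
  constructor
  · rintro ⟨A, hGL, hroots⟩
    exact onlyIf lam mu hlam hmu A hGL hroots
  · intro h
    exact construct lam mu hlam hmu h
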